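/- Let W ⊆ ℝ^n be a linear subspace and c, d ∈ ℝ^n with c ≥ 0. If there exists an optimal solution to Primal-Dual(W,d,c), then there exists an optimal solution (x,s) to Primal-Dual(W,d,c) such that ‖x − d‖_∞ ≤ κ_W ‖d_{Λ(d,c)}‖₁. -/

import Mathlib

open scoped BigOperators

variable {ι : Type*} [Fintype ι] [DecidableEq ι]

/-- The ℓ₁ norm of a vector. -/
noncomputable def norm1 (x : ι → ℝ) : ℝ := ∑ i, |x i|

/-- The ℓ∞ norm of a vector. -/
noncomputable def normInf (x : ι → ℝ) : ℝ := ⨆ i, |x i|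

/-- The ℓ₂ norm of a vector. -/
noncomputable def norm2 (x : ι → ℝ) : ℝ := Real.sqrt (∑ i, (x i) ^ 2)

/-- The componentwise negative part `max (-x) 0`. -/
noncomputable def vneg (x : ι → ℝ) : ι → ℝ := fun i => max (-(x i)) 0

/-- The componentwise positive part `max x 0`. -/
noncomputable def vpos (x : ι → ℝ) : ι → ℝ := fun i => max (x i) 0

/-- `y` is sign-consistent with `x`. -/
def SignConsistent (y x : ι → ℝ) : Prop :=
  (∀ i, 0 ≤ x i * y i) ∧ ∀ i, x i = 0 → y i = 0

/-- The subspace `ℝ^n_C` of vectors supported on `C`. -/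
def coordSubspace (C : Set ι) : Submodule ℝ (ι → ℝ) where
  carrier := {x | ∀ i ∉ C, x i = 0}
  zero_mem' := by intro i _; rfl
  add_mem' := by intro a b ha hb i hi; simp [ha i hi, hb i hi]
  smul_mem' := by intro c a ha i hi; simp [ha i hi]

/-- `C` is a circuit of the subspace `W`: `W ∩ ℝ^n_C` is one-dimensional and no
strict subset of `C` has this property. -/
def IsCircuit (W : Submodule ℝ (ι → ℝ)) (C : Set ι) : Prop :=
  Module.finrank ℝ ↥(W ⊓ coordSubspace C) = 1 ∧
  ∀ C' : Set ι, C' ⊂ C → Module.finrank ℝ ↥(W ⊓ coordSubspace C') ≠ 1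

/-- The circuit imbalance measure `κ_W`. -/
noncomputable def kappa (W : Submodule ℝ (ι → ℝ)) : ℝ :=
  sSup ({1} ∪ {r | ∃ C : Set ι, IsCircuit W C ∧ ∃ g ∈ W, g ≠ 0 ∧ {i | g i ≠ 0} = C ∧
    r = sSup ((fun i => |g i|) '' C) / sInf ((fun i => |g i|) '' C)})

/-- The matroidal closure of `K` with respect to `W`. -/
def clos (W : Submodule ℝ (ι → ℝ)) (K : Set ι) : Set ι :=
  K ∪ {j | j ∉ K ∧ ∃ C : Set ι, IsCircuit W C ∧ j ∈ C ∧ C ⊆ K ∪ {j}}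

/-- `z` is the minimum-norm lift `L_I^W(p)` of `p` to `W`:
`z ∈ W`, `z` agrees with `p` on `I`, and `z` has minimum ℓ₂-norm among such vectors. -/
def IsMinLift (W : Submodule ℝ (ι → ℝ)) (I : Finset ι) (p z : ι → ℝ) : Prop :=
  z ∈ W ∧ (∀ i ∈ I, z i = p i) ∧
  ∀ z' ∈ W, (∀ i ∈ I, z' i = p i) → norm2 z ≤ norm2 z'

/-- The ℓ₂→ℓ₂ operator norm of the lifting map `L_I^W` on `π_I(W)`. -/
noncomputable def liftOpNorm (W : Submodule ℝ (ι → ℝ)) (I : Finset ι) : ℝ :=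
  sSup {r | ∃ p z, IsMinLift W I p z ∧ r = norm2 z / Real.sqrt (∑ i ∈ I, (p i) ^ 2)}

/-- The condition number `χ̄_W = max{‖L_I^W‖ : ∅ ≠ I}`. -/
noncomputable def chiBar (W : Submodule ℝ (ι → ℝ)) : ℝ :=
  sSup {r | ∃ I : Finset ι, I.Nonempty ∧ r = liftOpNorm W I}

/-- The orthogonal complement of `W` in `ℝ^n`. -/
def orthComp (W : Submodule ℝ (ι → ℝ)) : Submodule ℝ (ι → ℝ) where
  carrier := {y | ∀ x ∈ W, ∑ i, x i * y i = 0}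
  zero_mem' := by intro x hx; simp
  add_mem' := by
    intro a b ha hb x hx
    simpa [mul_add, Finset.sum_add_distrib, ha x hx] using hb x hx
  smul_mem' := by
    intro c a ha x hx
    have h := ha x hx
    have : ∑ i, x i * (c • a) i = c * ∑ i, x i * a i := by
      rw [Finset.mul_sum]
      refine Finset.sum_congr rfl fun i _ => ?_
      simp [Pi.smul_apply, smul_eq_mul]; ring
    simpa [this, h]

/-- `x` is a feasible solution to the primal program of Primal-Dual(W,d,c). -/
def PrimalFeasible (W : Submodule ℝ (ι → ℝ)) (d x : ι → ℝ) : Prop :=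
  x - d ∈ W ∧ ∀ i, 0 ≤ x i

/-- `s` is a feasible solution to the dual program of Primal-Dual(W,d,c). -/
def DualFeasible (W : Submodule ℝ (ι → ℝ)) (c s : ι → ℝ) : Prop :=
  s - c ∈ orthComp W ∧ ∀ i, 0 ≤ s i

/-- `(x,s)` is an optimal solution to Primal-Dual(W,d,c): both feasible and `⟨x,s⟩ = 0`. -/
def IsOptimalPair (W : Submodule ℝ (ι → ℝ)) (d c x s : ι → ℝ) : Prop :=
  PrimalFeasible W d x ∧ DualFeasible W c s ∧ ∑ i, x i * s i = 0

/-- The ℓ₂→ℓ₂ operator norm of a matrix. -/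
noncomputable def l2OpNorm {m n : Type*} [Fintype m] [Fintype n] [DecidableEq n]
    (A : Matrix m n ℝ) : ℝ :=
  ‖LinearMap.toContinuousLinearMap (Matrix.toEuclideanLin A)‖

/-- The max-norm (largest absolute value of an entry) of a matrix. -/
noncomputable def matMaxNorm {m n : Type*} [Fintype m] [Fintype n] (A : Matrix m n ℝ) : ℝ :=
  ⨆ i, ⨆ j, |A i j|

/-!
Fix an optimal dual solution `s` and, among the primal solutions `x` optimal together with `s`,
take one closest to `d` in `ℓ₁`. Decompose `x - d ∈ W` into elementary vectors `h¹, …, hᵐ` of `W`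
sign-consistent with it. Each `hᵏ` must be blocked, for otherwise `x - ε hᵏ` would still be
optimal and closer to `d`: either `x_j = 0 < hᵏ_j`, which forces `d_j < 0`, or `hᵏ_j < 0 < c_j`,
which forces `0 ≤ x_j < d_j`. Either way `j ∈ Λ(d,c)`, `hᵏ_j ≠ 0` and `|x_j - d_j| ≤ |d_j|`.
Since the `|hᵏ|` add up to `|x - d|` and `|hᵏ_i| ≤ κ_W |hᵏ_j|`, summing over `k` gives
`|x_i - d_i| ≤ κ_W ∑_{j ∈ Λ} |d_j|`.
-/

open Finset Function Filter
open scoped Pointwise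

section Conformal

variable {ι : Type*} {x y z : ι → ℝ}

theorem signConsistent_iff :
    SignConsistent y x ↔ ∀ i, (0 ≤ x i → 0 ≤ y i) ∧ (x i ≤ 0 → y i ≤ 0) := by
  constructor
  · rintro ⟨hmul, hzero⟩ i
    rcases lt_trichotomy (x i) 0 with hx | hx | hx
    · exact ⟨fun h => absurd h hx.not_ge, fun _ => nonpos_of_mul_nonneg_right (hmul i) hx⟩
    · simp [hzero i hx, hx]
    · exact ⟨fun _ => nonneg_of_mul_nonneg_right (hmul i) hx, fun h => absurd h hx.not_ge⟩
  · intro h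
    refine ⟨fun i => ?_, fun i hx => le_antisymm ((h i).2 hx.le) ((h i).1 hx.ge)⟩
    rcases le_total 0 (x i) with hx | hx
    · exact mul_nonneg hx ((h i).1 hx)
    · exact mul_nonneg_of_nonpos_of_nonpos hx ((h i).2 hx)

namespace SignConsistent

theorem nonneg (h : SignConsistent y x) {i : ι} (hx : 0 ≤ x i) : 0 ≤ y i :=
  (signConsistent_iff.1 h i).1 hx

theorem nonpos (h : SignConsistent y x) {i : ι} (hx : x i ≤ 0) : y i ≤ 0 :=
  (signConsistent_iff.1 h i).2 hx

theorem pos (h : SignConsistent y x) {i : ι} (hy : 0 < y i) : 0 < x i :=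
  lt_of_not_ge fun hx => (h.nonpos hx).not_gt hy

theorem neg (h : SignConsistent y x) {i : ι} (hy : y i < 0) : x i < 0 :=
  lt_of_not_ge fun hx => (h.nonneg hx).not_gt hy

protected theorem refl (x : ι → ℝ) : SignConsistent x x :=
  ⟨fun i => mul_self_nonneg (x i), fun _ h => h⟩

protected theorem trans (hzy : SignConsistent z y) (hyx : SignConsistent y x) :
    SignConsistent z x :=
  signConsistent_iff.2 fun _ => ⟨fun h => hzy.nonneg (hyx.nonneg h),
    fun h => hzy.nonpos (hyx.nonpos h)⟩

theorem smul (h : SignConsistent y x) {t : ℝ} (ht : 0 ≤ t) : SignConsistent (t • y) x :=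
  signConsistent_iff.2 fun _ => ⟨fun hx => mul_nonneg ht (h.nonneg hx),
    fun hx => mul_nonpos_of_nonneg_of_nonpos ht (h.nonpos hx)⟩

theorem support_subset (h : SignConsistent y x) : support y ⊆ support x :=
  fun i hy hx => hy (h.2 i hx)

theorem abs_sub_mul (h : SignConsistent y x) {i : ι} (hle : |y i| ≤ |x i|) {t : ℝ}
    (ht₀ : 0 ≤ t) (ht₁ : t ≤ 1) : |x i - t * y i| = |x i| - t * |y i| := by
  rcases le_total 0 (x i) with hx | hx
  · have hy := h.nonneg hx
    rw [abs_of_nonneg hx, abs_of_nonneg hy] at hle ⊢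
    rw [abs_of_nonneg (by nlinarith)]
  · have hy := h.nonpos hx
    rw [abs_of_nonpos hx, abs_of_nonpos hy] at hle ⊢
    rw [abs_of_nonpos (by nlinarith)]
    ring

theorem sum_abs_apply {K : Type*} [Fintype K] {H : K → ι → ℝ}
    (hH : ∀ k, SignConsistent (H k) x) (hsum : ∑ k, H k = x) (i : ι) :
    ∑ k, |H k i| = |x i| := by
  have hx : ∑ k, H k i = x i := by rw [← hsum, Finset.sum_apply]
  rcases le_total 0 (x i) with h | h
  · rw [abs_of_nonneg h, ← hx]
    exact sum_congr rfl fun k _ => abs_of_nonneg ((hH k).nonneg h)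
  · rw [abs_of_nonpos h, ← hx, ← sum_neg_distrib]
    exact sum_congr rfl fun k _ => abs_of_nonpos ((hH k).nonpos h)

theorem abs_apply_le_of_sum_eq {K : Type*} [Fintype K] {H : K → ι → ℝ}
    (hH : ∀ k, SignConsistent (H k) x) (hsum : ∑ k, H k = x) (k : K) (i : ι) :
    |H k i| ≤ |x i| :=
  sum_abs_apply hH hsum i ▸ single_le_sum (fun k _ => abs_nonneg (H k i)) (mem_univ k)

end SignConsistent

end Conformal

section Elimination

variable {ι : Type*} [Fintype ι] {w g : ι → ℝ}

theorem exists_pos_signConsistent_sub_smul (hgw : support g ⊆ support w)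
    (hpos : ∃ i, 0 < w i * g i) :
    ∃ t : ℝ, 0 < t ∧ SignConsistent (w - t • g) w ∧ support (w - t • g) ⊂ support w := by
  classical
  set P := univ.filter fun i => 0 < w i * g i
  have hP : P.Nonempty := by simpa [P, Finset.filter_nonempty_iff] using hpos
  set t := P.inf' hP fun i => w i / g i
  have ht : 0 < t := (lt_inf'_iff hP).2 fun i hi =>
    div_pos_iff.2 (mul_pos_iff.1 (mem_filter.1 hi).2)
  -- `t` is the largest step keeping `w - t • g` sign-consistent with `w`
  have hstep : ∀ i, t * (w i * g i) ≤ w i ^ 2 := by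
    intro i
    by_cases hi : i ∈ P
    · have hwg := (mem_filter.1 hi).2
      have hg : g i ≠ 0 := right_ne_zero_of_mul hwg.ne'
      calc t * (w i * g i) ≤ w i / g i * (w i * g i) :=
            mul_le_mul_of_nonneg_right (inf'_le _ hi) hwg.le
        _ = w i ^ 2 := by field_simp
    · have hwg : w i * g i ≤ 0 := not_lt.1 fun h => hi (mem_filter.2 ⟨mem_univ i, h⟩)
      nlinarith [sq_nonneg (w i)]
  have hsc : SignConsistent (w - t • g) w := by
    refine ⟨fun i => ?_, fun i hi => ?_⟩
    · simp only [Pi.sub_apply, Pi.smul_apply, smul_eq_mul]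
      nlinarith [hstep i]
    · simp [hi, notMem_support.1 fun h => hgw h hi]
  obtain ⟨i₀, hi₀, ht₀⟩ := exists_mem_eq_inf' hP fun i => w i / g i
  have hwg₀ := (mem_filter.1 hi₀).2
  refine ⟨t, ht, hsc, (Set.ssubset_iff_of_subset hsc.support_subset).2
    ⟨i₀, left_ne_zero_of_mul hwg₀.ne', fun h => h ?_⟩⟩
  simp [t, ht₀, div_mul_cancel₀ _ (right_ne_zero_of_mul hwg₀.ne')]

theorem exists_signConsistent_sub_smul (hgw : support g ⊆ support w)
    (hne : ∃ i, w i * g i ≠ 0) :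
    ∃ t : ℝ, t ≠ 0 ∧ SignConsistent (w - t • g) w ∧ support (w - t • g) ⊂ support w := by
  obtain ⟨i, hi⟩ := hne
  rcases hi.lt_or_gt with hneg | hpos
  · obtain ⟨t, ht, h⟩ := exists_pos_signConsistent_sub_smul (g := -g) (by simpa using hgw)
      ⟨i, by simpa using hneg⟩
    exact ⟨-t, neg_ne_zero.2 ht.ne', by simpa using h⟩
  · obtain ⟨t, ht, h⟩ := exists_pos_signConsistent_sub_smul hgw ⟨i, hpos⟩
    exact ⟨t, ht.ne', h⟩

end Elimination

section Elementary

variable {ι : Type*} {W : Submodule ℝ (ι → ℝ)} {g : ι → ℝ}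

theorem mem_coordSubspace_iff_support_subset {C : Set ι} :
    g ∈ coordSubspace C ↔ support g ⊆ C :=
  support_subset_iff'.symm

def IsElementary (W : Submodule ℝ (ι → ℝ)) (g : ι → ℝ) : Prop :=
  g ∈ W ∧ g ≠ 0 ∧ IsCircuit W (support g)

theorem IsElementary.smul (hg : IsElementary W g) {t : ℝ} (ht : t ≠ 0) :
    IsElementary W (t • g) :=
  ⟨W.smul_mem t hg.1, smul_ne_zero ht hg.2.1, support_const_smul_of_ne_zero t g ht ▸ hg.2.2⟩

theorem IsElementary.exists_smul_eq (hg : IsElementary W g) {u : ι → ℝ} (hu : u ∈ W)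
    (hug : support u ⊆ support g) : ∃ a : ℝ, a • g = u := by
  have hg' : g ∈ W ⊓ coordSubspace (support g) :=
    ⟨hg.1, mem_coordSubspace_iff_support_subset.2 subset_rfl⟩
  obtain ⟨a, ha⟩ := (finrank_eq_one_iff_of_nonzero' (⟨g, hg'⟩ : ↥(W ⊓ coordSubspace (support g)))
    (by simpa using hg.2.1)).1 hg.2.2.1 ⟨u, hu, mem_coordSubspace_iff_support_subset.2 hug⟩
  exact ⟨a, congrArg Subtype.val ha⟩

theorem isCircuit_support_of_minimal [Fintype ι] (hg : g ∈ W) (hg0 : g ≠ 0)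
    (hmin : ∀ u ∈ W, u ≠ 0 → ¬support u ⊂ support g) : IsCircuit W (support g) := by
  refine ⟨?_, fun C hC hrank => ?_⟩
  · have hg' : g ∈ W ⊓ coordSubspace (support g) :=
      ⟨hg, mem_coordSubspace_iff_support_subset.2 subset_rfl⟩
    rw [finrank_eq_one_iff_of_nonzero' (⟨g, hg'⟩ : ↥(W ⊓ coordSubspace (support g)))
      (by simpa using hg0)]
    rintro ⟨u, huW, huC⟩
    replace huC := mem_coordSubspace_iff_support_subset.1 huC
    obtain ⟨i, hi⟩ := Function.ne_iff.1 hg0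
    refine ⟨u i / g i, Subtype.ext ?_⟩
    by_contra hne
    refine hmin (u - (u i / g i) • g) (W.sub_mem huW (W.smul_mem _ hg))
      (sub_ne_zero.2 (Ne.symm hne)) ((Set.ssubset_iff_of_subset ?_).2 ⟨i, hi, ?_⟩)
    · refine support_subset_iff'.2 fun j hj => ?_
      simp [notMem_support.1 hj, notMem_support.1 fun h => hj (huC h)]
    · simp [div_mul_cancel₀ _ hi]
  · obtain ⟨⟨u, huW, huC⟩, hu0⟩ := Module.finrank_pos_iff_exists_ne_zero.1 (hrank ▸ one_pos)
    exact hmin u huW (fun h => hu0 (Subtype.ext h))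
      (Set.ssubset_of_subset_of_ssubset (mem_coordSubspace_iff_support_subset.1 huC) hC)

theorem exists_isElementary_signConsistent [Fintype ι] {w : ι → ℝ} (hw : w ∈ W) (hw0 : w ≠ 0) :
    ∃ g, IsElementary W g ∧ SignConsistent g w := by
  -- a conformal vector of minimal support has a circuit as support
  obtain ⟨g, ⟨hgW, hg0, hgw⟩, hmin⟩ := (InvImage.wf support wellFounded_lt).has_min
    {g | g ∈ W ∧ g ≠ 0 ∧ SignConsistent g w} ⟨w, hw, hw0, .refl w⟩
  refine ⟨g, ⟨hgW, hg0, isCircuit_support_of_minimal hgW hg0 fun u huW hu0 hug => ?_⟩, hgw⟩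
  obtain ⟨i, hi⟩ := Function.ne_iff.1 hu0
  obtain ⟨t, ht, hsc, hss⟩ :=
    exists_signConsistent_sub_smul hug.subset ⟨i, mul_ne_zero (hug.subset hi) hi⟩
  refine hmin (g - t • u) ⟨W.sub_mem hgW (W.smul_mem t huW), fun h => hug.ne ?_, hsc.trans hgw⟩ hss
  rw [sub_eq_zero.1 h, support_const_smul_of_ne_zero t u ht]

theorem exists_sum_isElementary_signConsistent [Fintype ι] {w : ι → ℝ} (hw : w ∈ W) :
    ∃ (m : ℕ) (H : Fin m → ι → ℝ),
      (∀ k, IsElementary W (H k) ∧ SignConsistent (H k) w) ∧ ∑ k, H k = w := by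
  induction hS : support w using WellFoundedLT.induction generalizing w with
  | ind S ih =>
    subst hS
    by_cases hw0 : w = 0
    · exact ⟨0, Fin.elim0, fun k => k.elim0, by simp [hw0]⟩
    obtain ⟨g, hg, hgw⟩ := exists_isElementary_signConsistent hw hw0
    obtain ⟨i, hi⟩ := Function.ne_iff.1 hg.2.1
    have hpos : 0 < w i * g i :=
      (hgw.1 i).lt_of_ne (mul_ne_zero (hgw.support_subset hi) hi).symm
    obtain ⟨t, ht, hsc, hss⟩ := exists_pos_signConsistent_sub_smul hgw.support_subset ⟨i, hpos⟩
    obtain ⟨m, H, hH, hsum⟩ := ih _ hss (W.sub_mem hw (W.smul_mem t hg.1)) rfl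
    refine ⟨m + 1, Fin.cons (t • g) H,
      Fin.cases ⟨hg.smul ht.ne', hgw.smul ht.le⟩ fun k => ⟨(hH k).1, (hH k).2.trans hsc⟩, ?_⟩
    rw [Fin.sum_cons, hsum, add_sub_cancel]

end Elementary

section Imbalance

variable {ι : Type*} {W : Submodule ℝ (ι → ℝ)} {g : ι → ℝ}

noncomputable def imbalance (g : ι → ℝ) : ℝ :=
  sSup ((fun i => |g i|) '' support g) / sInf ((fun i => |g i|) '' support g)

theorem imbalance_smul (g : ι → ℝ) {a : ℝ} (ha : a ≠ 0) : imbalance (a • g) = imbalance g := by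
  have himage : (fun i => |(a • g) i|) '' support g = |a| • ((fun i => |g i|) '' support g) := by
    rw [← Set.image_smul, Set.image_image]
    simp [abs_mul]
  rw [imbalance, support_const_smul_of_ne_zero a g ha, himage,
    Real.sSup_smul_of_nonneg (abs_nonneg a), Real.sInf_smul_of_nonneg (abs_nonneg a),
    smul_eq_mul, smul_eq_mul, mul_div_mul_left _ _ (abs_ne_zero.2 ha), imbalance]

theorem kappa_eq_sSup_imbalance (W : Submodule ℝ (ι → ℝ)) :
    kappa W = sSup ({1} ∪ {r | ∃ g, IsElementary W g ∧ r = imbalance g}) := by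
  refine congrArg (fun A => sSup ({1} ∪ A)) (Set.ext fun r => ?_)
  constructor
  · rintro ⟨C, hC, g, hg, hg0, rfl, rfl⟩
    exact ⟨g, ⟨hg, hg0, hC⟩, rfl⟩
  · rintro ⟨g, ⟨hg, hg0, hC⟩, rfl⟩
    exact ⟨_, hC, g, hg, hg0, rfl, rfl⟩

theorem bddAbove_imbalance [Finite ι] (W : Submodule ℝ (ι → ℝ)) :
    BddAbove {r | ∃ g, IsElementary W g ∧ r = imbalance g} := by
  classical
  -- all elementary vectors with a given support are proportional, so one per circuit suffices
  refine (Set.finite_range fun C : Set ι =>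
    if h : ∃ g, IsElementary W g ∧ support g = C then imbalance h.choose else 0).bddAbove.mono ?_
  rintro _ ⟨g, hg, rfl⟩
  have h : ∃ g', IsElementary W g' ∧ support g' = support g := ⟨g, hg, rfl⟩
  refine ⟨support g, ?_⟩
  obtain ⟨hg', hsupp⟩ := h.choose_spec
  obtain ⟨a, ha⟩ := hg'.exists_smul_eq hg.1 hsupp.ge
  have ha0 : a ≠ 0 := by
    rintro rfl
    exact hg.2.1 (by simpa using ha.symm)
  simp only [dif_pos h]
  conv_rhs => rw [← ha]
  exact (imbalance_smul _ ha0).symm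

theorem one_le_kappa [Finite ι] (W : Submodule ℝ (ι → ℝ)) : 1 ≤ kappa W := by
  rw [kappa_eq_sSup_imbalance]
  exact le_csSup ((bddAbove_singleton).union (bddAbove_imbalance W)) (Or.inl rfl)

theorem IsElementary.imbalance_le_kappa [Finite ι] (hg : IsElementary W g) :
    imbalance g ≤ kappa W := by
  rw [kappa_eq_sSup_imbalance]
  exact le_csSup ((bddAbove_singleton).union (bddAbove_imbalance W)) (Or.inr ⟨g, hg, rfl⟩)

theorem IsElementary.abs_le_kappa_mul [Finite ι] (hg : IsElementary W g) {j : ι} (hj : g j ≠ 0)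
    (i : ι) : |g i| ≤ kappa W * |g j| := by
  by_cases hi : g i = 0
  · rw [hi, abs_zero]
    exact mul_nonneg (zero_le_one.trans (one_le_kappa W)) (abs_nonneg _)
  set S := (fun i => |g i|) '' support g
  have hS : S.Finite := (Set.toFinite _).image _
  have hinf : 0 < sInf S := by
    obtain ⟨k, hk, hk'⟩ := Set.Nonempty.csInf_mem (s := S) ⟨|g j|, j, hj, rfl⟩ hS
    exact hk' ▸ abs_pos.2 hk
  calc |g i| ≤ sSup S := le_csSup hS.bddAbove ⟨i, hi, rfl⟩
    _ = imbalance g * sInf S := (div_mul_cancel₀ _ hinf.ne').symm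
    _ ≤ kappa W * |g j| :=
      mul_le_mul hg.imbalance_le_kappa (csInf_le hS.bddBelow ⟨j, hj, rfl⟩) hinf.le
        (zero_le_one.trans (one_le_kappa W))

end Imbalance

section LinearProgram

variable {ι : Type*} [Fintype ι] {W : Submodule ℝ (ι → ℝ)} {c d x s h : ι → ℝ}

theorem norm_le_norm1 (v : ι → ℝ) : ‖v‖ ≤ norm1 v :=
  (pi_norm_le_iff_of_nonneg (sum_nonneg fun i _ => abs_nonneg (v i))).2 fun i =>
    (Real.norm_eq_abs (v i)).symm ▸ single_le_sum (fun i _ => abs_nonneg (v i)) (mem_univ i)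

theorem norm1_pos {v : ι → ℝ} (hv : v ≠ 0) : 0 < norm1 v := by
  obtain ⟨i, hi⟩ := Function.ne_iff.1 hv
  exact sum_pos' (fun i _ => abs_nonneg (v i)) ⟨i, mem_univ i, abs_pos.2 hi⟩

theorem exists_isMinOn_norm1_sub {S : Set (ι → ℝ)} (hS : IsClosed S) (hne : S.Nonempty)
    (d : ι → ℝ) : ∃ x ∈ S, IsMinOn (fun y => norm1 (y - d)) S x := by
  obtain ⟨x₀, hx₀⟩ := hne
  have hcont : Continuous fun y : ι → ℝ => norm1 (y - d) := by unfold norm1; fun_prop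
  have hcoercive : Tendsto (fun y : ι → ℝ => norm1 (y - d)) (cocompact _) atTop :=
    tendsto_atTop_mono
      (fun y => by linarith [norm_le_norm_add_norm_sub' y d, norm_le_norm1 (y - d)])
      (tendsto_atTop_add_const_right _ (-‖d‖) tendsto_norm_cocompact_atTop)
  exact hcont.continuousOn.exists_isMinOn' hS hx₀
    ((hcoercive.eventually (eventually_ge_atTop _)).filter_mono inf_le_left)

theorem isClosed_setOf_isOptimalPair : IsClosed {x | IsOptimalPair W d c x s} := by
  have hW : IsClosed {x | x - d ∈ W} :=
    W.closed_of_finiteDimensional.preimage (continuous_id.sub continuous_const)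
  have hnonneg : IsClosed {x : ι → ℝ | 0 ≤ x} := isClosed_le continuous_const continuous_id
  have hcompl : IsClosed {x : ι → ℝ | ∑ i, x i * s i = 0} :=
    isClosed_eq (by fun_prop) continuous_const
  exact (hW.inter hnonneg).inter (isClosed_const.inter hcompl)

theorem sum_mul_eq_of_sub_mem_orthComp (hh : h ∈ W) (hs : s - c ∈ orthComp W) :
    ∑ i, h i * s i = ∑ i, h i * c i := by
  have := hs h hh
  simp only [Pi.sub_apply, mul_sub, sum_sub_distrib] at this
  linarith

theorem exists_pos_le_one_mul_le (hx : ∀ i, 0 ≤ x i)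
    (hxh : ∀ i, x i = 0 → h i ≤ 0) : ∃ ε : ℝ, 0 < ε ∧ ε ≤ 1 ∧ ∀ i, ε * h i ≤ x i := by
  have hsmall : ∀ᶠ ε in nhdsWithin (0 : ℝ) (Set.Ioi 0), ε ≤ 1 ∧ ∀ i, ε * h i ≤ x i := by
    refine .and (nhdsWithin_le_nhds (Iic_mem_nhds zero_lt_one)) (eventually_all.2 fun i => ?_)
    rcases (hx i).eq_or_lt with hxi | hxi
    · exact eventually_nhdsWithin_of_forall fun ε (hε : 0 < ε) =>
        hxi ▸ mul_nonpos_of_nonneg_of_nonpos hε.le (hxh i hxi.symm)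
    · have : Tendsto (fun ε : ℝ => ε * h i) (nhds 0) (nhds 0) := by
        simpa using (continuous_mul_const (h i)).tendsto 0
      exact nhdsWithin_le_nhds ((this.eventually (eventually_lt_nhds hxi)).mono fun _ => le_of_lt)
  obtain ⟨ε, ⟨hε₁, hεx⟩, hε₀⟩ := (hsmall.and self_mem_nhdsWithin).exists
  exact ⟨ε, hε₀, hε₁, hεx⟩

theorem IsOptimalPair.exists_norm1_sub_lt (hopt : IsOptimalPair W d c x s) (hc : ∀ i, 0 ≤ c i)
    (hW : h ∈ W) (hh0 : h ≠ 0) (hhw : SignConsistent h (x - d))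
    (hle : ∀ i, |h i| ≤ |x i - d i|) (hx : ∀ i, x i = 0 → h i ≤ 0)
    (hch : ∀ i, 0 < c i → 0 ≤ h i) :
    ∃ x', IsOptimalPair W d c x' s ∧ norm1 (x' - d) < norm1 (x - d) := by
  obtain ⟨⟨hxW, hx0⟩, hs, hxs⟩ := hopt
  obtain ⟨ε, hε₀, hε₁, hεx⟩ := exists_pos_le_one_mul_le hx0 hx
  have hhc : 0 ≤ ∑ i, h i * c i := sum_nonneg fun i _ => by
    rcases (hc i).eq_or_lt with hci | hci
    · rw [← hci, mul_zero]
    · exact mul_nonneg (hch i hci) hci.le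
  have hx's : ∑ i, (x - ε • h) i * s i = 0 := by
    have heq : ∑ i, (x - ε • h) i * s i = -(ε * ∑ i, h i * c i) := by
      rw [← sum_mul_eq_of_sub_mem_orthComp hW hs.1, mul_sum]
      simp only [Pi.sub_apply, Pi.smul_apply, smul_eq_mul, sub_mul, sum_sub_distrib, hxs]
      simp [mul_assoc]
    refine le_antisymm (heq ▸ neg_nonpos.2 (mul_nonneg hε₀.le hhc))
      (sum_nonneg fun i _ => mul_nonneg (sub_nonneg.2 (hεx i)) (hs.2 i))
  have hnorm : norm1 (x - ε • h - d) = norm1 (x - d) - ε * norm1 h := by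
    simp only [norm1, mul_sum, ← sum_sub_distrib]
    refine sum_congr rfl fun i _ => ?_
    rw [← hhw.abs_sub_mul (hle i) hε₀.le hε₁]
    simp only [Pi.sub_apply, Pi.smul_apply, smul_eq_mul]
    ring_nf
  refine ⟨x - ε • h, ⟨⟨?_, fun i => sub_nonneg.2 (hεx i)⟩, hs, hx's⟩, ?_⟩
  · rw [sub_right_comm]
    exact W.sub_mem hxW (W.smul_mem ε hW)
  · rw [hnorm]
    nlinarith [norm1_pos hh0]

theorem exists_mem_Lambda_of_isMinOn (hopt : IsOptimalPair W d c x s)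
    (hmin : IsMinOn (fun y => norm1 (y - d)) {y | IsOptimalPair W d c y s} x)
    (hc : ∀ i, 0 ≤ c i) (hW : h ∈ W) (hh0 : h ≠ 0) (hhw : SignConsistent h (x - d))
    (hle : ∀ i, |h i| ≤ |x i - d i|) :
    ∃ j, (d j < 0 ∨ 0 < c j) ∧ h j ≠ 0 ∧ |x j - d j| ≤ |d j| := by
  have hblocked : (∃ j, x j = 0 ∧ 0 < h j) ∨ ∃ j, 0 < c j ∧ h j < 0 := by
    by_contra! hfree
    obtain ⟨x', hx', hlt⟩ := hopt.exists_norm1_sub_lt hc hW hh0 hhw hle hfree.1 hfree.2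
    exact (hmin hx').not_gt hlt
  rcases hblocked with ⟨j, hxj, hhj⟩ | ⟨j, hcj, hhj⟩
  · have hw : 0 < x j - d j := hhw.pos hhj
    refine ⟨j, Or.inl (by linarith), hhj.ne', ?_⟩
    rw [hxj, zero_sub, abs_neg]
  · have hw : x j - d j < 0 := hhw.neg hhj
    have hxj := hopt.1.2 j
    refine ⟨j, Or.inr hcj, hhj.ne, ?_⟩
    rw [abs_of_neg hw, abs_of_pos (by linarith)]
    linarith

end LinearProgram

theorem sum_apply_le_sum_image {K ι : Type*} [Fintype K] [DecidableEq ι] (a : K → ι → ℝ)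
    (ha : ∀ k p, 0 ≤ a k p) (j : K → ι) :
    ∑ k, a k (j k) ≤ ∑ p ∈ univ.image j, ∑ k, a k p :=
  calc ∑ k, a k (j k) ≤ ∑ k, ∑ p ∈ univ.image j, a k p :=
        sum_le_sum fun k _ => single_le_sum (fun p _ => ha k p) (mem_image_of_mem j (mem_univ k))
    _ = ∑ p ∈ univ.image j, ∑ k, a k p := sum_comm

theorem abs_le_kappa_mul_sum_of_sum_eq {ι : Type*} [Fintype ι] [DecidableEq ι]
    {W : Submodule ℝ (ι → ℝ)} {w d : ι → ℝ} {Λ : Finset ι} {m : ℕ} {H : Fin m → ι → ℝ}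
    (hH : ∀ k, IsElementary W (H k) ∧ SignConsistent (H k) w) (hsum : ∑ k, H k = w)
    (hΛ : ∀ k, ∃ j ∈ Λ, H k j ≠ 0 ∧ |w j| ≤ |d j|) (i : ι) :
    |w i| ≤ kappa W * ∑ p ∈ Λ, |d p| := by
  choose j hjΛ hHj hwd using hΛ
  have habs := SignConsistent.sum_abs_apply (fun k => (hH k).2) hsum
  calc |w i| = ∑ k, |H k i| := (habs i).symm
    _ ≤ ∑ k, kappa W * |H k (j k)| := sum_le_sum fun k _ => (hH k).1.abs_le_kappa_mul (hHj k) i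
    _ = kappa W * ∑ k, |H k (j k)| := (mul_sum _ _ _).symm
    _ ≤ kappa W * ∑ p ∈ Λ, |d p| := by
      refine mul_le_mul_of_nonneg_left ?_ (zero_le_one.trans (one_le_kappa W))
      calc ∑ k, |H k (j k)| ≤ ∑ p ∈ univ.image j, ∑ k, |H k p| :=
            sum_apply_le_sum_image _ (fun k p => abs_nonneg (H k p)) j
        _ ≤ ∑ p ∈ univ.image j, |d p| := sum_le_sum fun p hp => by
            obtain ⟨k, -, rfl⟩ := mem_image.1 hp
            exact (habs (j k)).trans_le (hwd k)
        _ ≤ ∑ p ∈ Λ, |d p| := sum_le_sum_of_subset_of_nonneg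
            (image_subset_iff.2 fun k _ => hjΛ k) fun p _ _ => abs_nonneg (d p)

/-- if `c ≥ 0` and Primal-Dual(W,d,c) has an optimal solution, then it
has an optimal solution `(x,s)` with `‖x − d‖_∞ ≤ κ_W ‖d_{Λ(d,c)}‖₁`,
where `Λ(d,c) = supp(d⁻) ∪ supp(c⁺)`. -/
theorem optimal_proximity {n : ℕ} (W : Submodule ℝ (Fin n → ℝ)) (c d : Fin n → ℝ)
    (hc : ∀ i, 0 ≤ c i) (hopt : ∃ x s : Fin n → ℝ, IsOptimalPair W d c x s) :
    ∃ x s : Fin n → ℝ, IsOptimalPair W d c x s ∧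
      normInf (x - d) ≤ kappa W * ∑ i, if d i < 0 ∨ 0 < c i then |d i| else 0 := by
  obtain ⟨x₀, s, hopt₀⟩ := hopt
  obtain ⟨x, hx, hmin⟩ := exists_isMinOn_norm1_sub isClosed_setOf_isOptimalPair ⟨x₀, hopt₀⟩ d
  obtain ⟨m, H, hH, hsum⟩ := exists_sum_isElementary_signConsistent hx.1.1
  have hΛ : ∀ k, ∃ j ∈ univ.filter (fun p => d p < 0 ∨ 0 < c p),
      H k j ≠ 0 ∧ |(x - d) j| ≤ |d j| := fun k => by
    obtain ⟨j, hj, hHj, hle⟩ := exists_mem_Lambda_of_isMinOn hx hmin hc (hH k).1.1 (hH k).1.2.1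
      (hH k).2 (SignConsistent.abs_apply_le_of_sum_eq (fun k => (hH k).2) hsum k)
    exact ⟨j, mem_filter.2 ⟨mem_univ j, hj⟩, hHj, hle⟩
  refine ⟨x, s, hx, ?_⟩
  rw [← sum_filter]
  exact Real.iSup_le (abs_le_kappa_mul_sum_of_sum_eq hH hsum hΛ) (mul_nonneg
    (zero_le_one.trans (one_le_kappa W)) (sum_nonneg fun p _ => abs_nonneg (d p)))
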